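/- arXiv:1908.07867 — 2 statements merged into one kernel-verified Lean document; each statement's English description precedes it below -/
import Mathlib

section
/- Under an affine transformation of R³ mapping a graph {u = F(x,y)} to a graph {v = G(s,t)}, with the notation M := [[a + c·F_x, k + m·F_x],[b + c·F_y, l + m·F_y]] (assumed invertible, det M = Λ) and δ the determinant of the linear part of the transformation, one has the matrix identity M · Hessian_G · Mᵀ = (δ/Λ) · Hessian_F, where Hessian_F = [[F_xx, F_xy],[F_yx, F_yy]] and Hessian_G is evaluated at the corresponding point. In particular the rank of the Hessian matrix of a graphed surface is invariant under affine transformations. -/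
/-- Partial derivative in the first variable. -/
noncomputable def pdx (F : ℝ × ℝ → ℝ) : ℝ × ℝ → ℝ :=
  fun p => deriv (fun x => F (x, p.2)) p.1

/-- Partial derivative in the second variable. -/
noncomputable def pdy (F : ℝ × ℝ → ℝ) : ℝ × ℝ → ℝ :=
  fun p => deriv (fun y => F (p.1, y)) p.2

lemma hasDerivAt_slice_x {F : ℝ × ℝ → ℝ} (hF : ContDiff ℝ (⊤ : ℕ∞) F) (x y : ℝ) :
    HasDerivAt (fun t => F (t, y)) (fderiv ℝ F (x, y) (1, 0)) x := by
  have h1 : HasDerivAt (fun t : ℝ => (t, y)) ((1 : ℝ), (0 : ℝ)) x :=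
    (hasDerivAt_id x).prodMk (hasDerivAt_const x y)
  exact ((hF.differentiable (by simp) (x, y)).hasFDerivAt).comp_hasDerivAt x h1

lemma hasDerivAt_slice_y {F : ℝ × ℝ → ℝ} (hF : ContDiff ℝ (⊤ : ℕ∞) F) (x y : ℝ) :
    HasDerivAt (fun t => F (x, t)) (fderiv ℝ F (x, y) (0, 1)) y := by
  have h1 : HasDerivAt (fun t : ℝ => (x, t)) ((0 : ℝ), (1 : ℝ)) y :=
    (hasDerivAt_const y x).prodMk (hasDerivAt_id y)
  exact ((hF.differentiable (by simp) (x, y)).hasFDerivAt).comp_hasDerivAt y h1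

lemma pdx_eq {F : ℝ × ℝ → ℝ} (hF : ContDiff ℝ (⊤ : ℕ∞) F) (x y : ℝ) :
    pdx F (x, y) = fderiv ℝ F (x, y) (1, 0) := by
  simpa [pdx] using (hasDerivAt_slice_x hF x y).deriv

lemma pdy_eq {F : ℝ × ℝ → ℝ} (hF : ContDiff ℝ (⊤ : ℕ∞) F) (x y : ℝ) :
    pdy F (x, y) = fderiv ℝ F (x, y) (0, 1) := by
  simpa [pdy] using (hasDerivAt_slice_y hF x y).deriv

lemma hasDerivAt_pdx {F : ℝ × ℝ → ℝ} (hF : ContDiff ℝ (⊤ : ℕ∞) F) (x y : ℝ) :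
    HasDerivAt (fun t => F (t, y)) (pdx F (x, y)) x := by
  rw [pdx_eq hF]; exact hasDerivAt_slice_x hF x y

lemma hasDerivAt_pdy {F : ℝ × ℝ → ℝ} (hF : ContDiff ℝ (⊤ : ℕ∞) F) (x y : ℝ) :
    HasDerivAt (fun t => F (x, t)) (pdy F (x, y)) y := by
  rw [pdy_eq hF]; exact hasDerivAt_slice_y hF x y

lemma fderiv_pair {F : ℝ × ℝ → ℝ} (hF : ContDiff ℝ (⊤ : ℕ∞) F) (x y v₁ v₂ : ℝ) :
    fderiv ℝ F (x, y) (v₁, v₂) = v₁ * pdx F (x, y) + v₂ * pdy F (x, y) := by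
  have h : (v₁, v₂) = v₁ • ((1 : ℝ), (0 : ℝ)) + v₂ • ((0 : ℝ), (1 : ℝ)) := by
    simp [Prod.ext_iff]
  rw [h, map_add, map_smul, map_smul, pdx_eq hF, pdy_eq hF, smul_eq_mul, smul_eq_mul]

lemma hasDerivAt_comp2 {H : ℝ × ℝ → ℝ} (hH : ContDiff ℝ (⊤ : ℕ∞) H) {σ τ : ℝ → ℝ}
    {σ' τ' t : ℝ} (hσ : HasDerivAt σ σ' t) (hτ : HasDerivAt τ τ' t) :
    HasDerivAt (fun u => H (σ u, τ u))
      (pdx H (σ t, τ t) * σ' + pdy H (σ t, τ t) * τ') t := by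
  have hp : HasDerivAt (fun u => (σ u, τ u)) (σ', τ') t := hσ.prodMk hτ
  have h := ((hH.differentiable (by simp) (σ t, τ t)).hasFDerivAt).comp_hasDerivAt t hp
  exact h.congr_deriv (by rw [fderiv_pair hH]; ring)

lemma contDiff_pdx {F : ℝ × ℝ → ℝ} (hF : ContDiff ℝ (⊤ : ℕ∞) F) : ContDiff ℝ (⊤ : ℕ∞) (pdx F) := by
  have h : pdx F = fun p => fderiv ℝ F p (1, 0) :=
    funext fun p => by rcases p with ⟨x, y⟩; exact pdx_eq hF x y
  rw [h]
  exact (hF.fderiv_right (by simp)).clm_apply contDiff_const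

lemma contDiff_pdy {F : ℝ × ℝ → ℝ} (hF : ContDiff ℝ (⊤ : ℕ∞) F) : ContDiff ℝ (⊤ : ℕ∞) (pdy F) := by
  have h : pdy F = fun p => fderiv ℝ F p (0, 1) :=
    funext fun p => by rcases p with ⟨x, y⟩; exact pdy_eq hF x y
  rw [h]
  exact (hF.fderiv_right (by simp)).clm_apply contDiff_const

/-- Matrix transformation rule for the Hessian of a graphed surface under an
affine transformation of `ℝ³`: `M * Hess_G * Mᵀ = (δ/Λ) • Hess_F`, hence the
rank of the Hessian is invariant. -/
theorem hessian_matrix_transform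
    (F G : ℝ × ℝ → ℝ) (hF : ContDiff ℝ (⊤ : ℕ∞) F) (hG : ContDiff ℝ (⊤ : ℕ∞) G)
    (a b c d k l m n p q r s₀ : ℝ)
    (hδ : a * (l * r - m * q) - b * (k * r - m * p) + c * (k * q - l * p) ≠ 0)
    (hfund : ∀ x y : ℝ,
      p * x + q * y + r * F (x, y) + s₀
        = G (a * x + b * y + c * F (x, y) + d, k * x + l * y + m * F (x, y) + n))
    (x y : ℝ)
    (hΛ : (a + c * pdx F (x, y)) * (l + m * pdy F (x, y))
        - (b + c * pdy F (x, y)) * (k + m * pdx F (x, y)) ≠ 0) :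
    let δ := a * (l * r - m * q) - b * (k * r - m * p) + c * (k * q - l * p)
    let Λ := (a + c * pdx F (x, y)) * (l + m * pdy F (x, y))
        - (b + c * pdy F (x, y)) * (k + m * pdx F (x, y))
    let st : ℝ × ℝ := (a * x + b * y + c * F (x, y) + d, k * x + l * y + m * F (x, y) + n)
    let M : Matrix (Fin 2) (Fin 2) ℝ :=
      !![a + c * pdx F (x, y), k + m * pdx F (x, y);
         b + c * pdy F (x, y), l + m * pdy F (x, y)]
    let HG : Matrix (Fin 2) (Fin 2) ℝ :=
      !![pdx (pdx G) st, pdy (pdx G) st;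
         pdx (pdy G) st, pdy (pdy G) st]
    let HF : Matrix (Fin 2) (Fin 2) ℝ :=
      !![pdx (pdx F) (x, y), pdy (pdx F) (x, y);
         pdx (pdy F) (x, y), pdy (pdy F) (x, y)]
    M * HG * M.transpose = (δ / Λ) • HF ∧ HG.rank = HF.rank := by
  intro δ Λ st M HG HF
  have hFx : ContDiff ℝ (⊤ : ℕ∞) (pdx F) := contDiff_pdx hF
  have hFy : ContDiff ℝ (⊤ : ℕ∞) (pdy F) := contDiff_pdy hF
  have hGs : ContDiff ℝ (⊤ : ℕ∞) (pdx G) := contDiff_pdx hG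
  have hGt : ContDiff ℝ (⊤ : ℕ∞) (pdy G) := contDiff_pdy hG
  -- first-order identities everywhere
  have key1 : ∀ X Y : ℝ,
      p + r * pdx F (X, Y)
        = pdx G (a * X + b * Y + c * F (X, Y) + d, k * X + l * Y + m * F (X, Y) + n)
            * (a + c * pdx F (X, Y))
        + pdy G (a * X + b * Y + c * F (X, Y) + d, k * X + l * Y + m * F (X, Y) + n)
            * (k + m * pdx F (X, Y)) := by
    intro X Y
    have hσ : HasDerivAt (fun t => a * t + b * Y + c * F (t, Y) + d)
        (a + c * pdx F (X, Y)) X := by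
      have h := ((((hasDerivAt_id X).const_mul a).add_const (b * Y)).add
        ((hasDerivAt_pdx hF X Y).const_mul c)).add_const d
      exact h.congr_deriv (by ring)
    have hτ : HasDerivAt (fun t => k * t + l * Y + m * F (t, Y) + n)
        (k + m * pdx F (X, Y)) X := by
      have h := ((((hasDerivAt_id X).const_mul k).add_const (l * Y)).add
        ((hasDerivAt_pdx hF X Y).const_mul m)).add_const n
      exact h.congr_deriv (by ring)
    have hR := hasDerivAt_comp2 hG hσ hτ
    have hL : HasDerivAt (fun t => p * t + q * Y + r * F (t, Y) + s₀)
        (p + r * pdx F (X, Y)) X := by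
      have h := ((((hasDerivAt_id X).const_mul p).add_const (q * Y)).add
        ((hasDerivAt_pdx hF X Y).const_mul r)).add_const s₀
      exact h.congr_deriv (by ring)
    have hfe : (fun t => p * t + q * Y + r * F (t, Y) + s₀)
        = fun t => G (a * t + b * Y + c * F (t, Y) + d, k * t + l * Y + m * F (t, Y) + n) :=
      funext fun t => hfund t Y
    exact (hfe ▸ hL).unique hR
  have key2 : ∀ X Y : ℝ,
      q + r * pdy F (X, Y)
        = pdx G (a * X + b * Y + c * F (X, Y) + d, k * X + l * Y + m * F (X, Y) + n)
            * (b + c * pdy F (X, Y))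
        + pdy G (a * X + b * Y + c * F (X, Y) + d, k * X + l * Y + m * F (X, Y) + n)
            * (l + m * pdy F (X, Y)) := by
    intro X Y
    have hσ : HasDerivAt (fun t => a * X + b * t + c * F (X, t) + d)
        (b + c * pdy F (X, Y)) Y := by
      have h := ((((hasDerivAt_id Y).const_mul b).const_add (a * X)).add
        ((hasDerivAt_pdy hF X Y).const_mul c)).add_const d
      exact h.congr_deriv (by ring)
    have hτ : HasDerivAt (fun t => k * X + l * t + m * F (X, t) + n)
        (l + m * pdy F (X, Y)) Y := by
      have h := ((((hasDerivAt_id Y).const_mul l).const_add (k * X)).add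
        ((hasDerivAt_pdy hF X Y).const_mul m)).add_const n
      exact h.congr_deriv (by ring)
    have hR := hasDerivAt_comp2 hG hσ hτ
    have hL : HasDerivAt (fun t => p * X + q * t + r * F (X, t) + s₀)
        (q + r * pdy F (X, Y)) Y := by
      have h := ((((hasDerivAt_id Y).const_mul q).const_add (p * X)).add
        ((hasDerivAt_pdy hF X Y).const_mul r)).add_const s₀
      exact h.congr_deriv (by ring)
    have hfe : (fun t => p * X + q * t + r * F (X, t) + s₀)
        = fun t => G (a * X + b * t + c * F (X, t) + d, k * X + l * t + m * F (X, t) + n) :=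
      funext fun t => hfund X t
    exact (hfe ▸ hL).unique hR
  -- slice derivatives at the base point
  have hσX : HasDerivAt (fun t => a * t + b * y + c * F (t, y) + d)
      (a + c * pdx F (x, y)) x := by
    have h := ((((hasDerivAt_id x).const_mul a).add_const (b * y)).add
      ((hasDerivAt_pdx hF x y).const_mul c)).add_const d
    exact h.congr_deriv (by ring)
  have hτX : HasDerivAt (fun t => k * t + l * y + m * F (t, y) + n)
      (k + m * pdx F (x, y)) x := by
    have h := ((((hasDerivAt_id x).const_mul k).add_const (l * y)).add
      ((hasDerivAt_pdx hF x y).const_mul m)).add_const n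
    exact h.congr_deriv (by ring)
  have hσY : HasDerivAt (fun t => a * x + b * t + c * F (x, t) + d)
      (b + c * pdy F (x, y)) y := by
    have h := ((((hasDerivAt_id y).const_mul b).const_add (a * x)).add
      ((hasDerivAt_pdy hF x y).const_mul c)).add_const d
    exact h.congr_deriv (by ring)
  have hτY : HasDerivAt (fun t => k * x + l * t + m * F (x, t) + n)
      (l + m * pdy F (x, y)) y := by
    have h := ((((hasDerivAt_id y).const_mul l).const_add (k * x)).add
      ((hasDerivAt_pdy hF x y).const_mul m)).add_const n
    exact h.congr_deriv (by ring)
  -- second-order identities at the base point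
  have h11 : r * pdx (pdx F) (x, y)
      = (pdx (pdx G) st * (a + c * pdx F (x, y)) + pdy (pdx G) st * (k + m * pdx F (x, y)))
          * (a + c * pdx F (x, y))
        + pdx G st * (c * pdx (pdx F) (x, y))
        + ((pdx (pdy G) st * (a + c * pdx F (x, y)) + pdy (pdy G) st * (k + m * pdx F (x, y)))
          * (k + m * pdx F (x, y))
        + pdy G st * (m * pdx (pdx F) (x, y))) := by
    have hL : HasDerivAt (fun t => p + r * pdx F (t, y)) (r * pdx (pdx F) (x, y)) x :=
      ((hasDerivAt_pdx hFx x y).const_mul r).const_add p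
    have hR := ((hasDerivAt_comp2 hGs hσX hτX).mul
        (((hasDerivAt_pdx hFx x y).const_mul c).const_add a)).add
      ((hasDerivAt_comp2 hGt hσX hτX).mul
        (((hasDerivAt_pdx hFx x y).const_mul m).const_add k))
    have hfe : (fun t => p + r * pdx F (t, y))
        = fun t => pdx G (a * t + b * y + c * F (t, y) + d, k * t + l * y + m * F (t, y) + n)
            * (a + c * pdx F (t, y))
          + pdy G (a * t + b * y + c * F (t, y) + d, k * t + l * y + m * F (t, y) + n)
            * (k + m * pdx F (t, y)) :=
      funext fun t => key1 t y
    exact (hfe ▸ hL).unique hR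
  have h12 : r * pdy (pdx F) (x, y)
      = (pdx (pdx G) st * (b + c * pdy F (x, y)) + pdy (pdx G) st * (l + m * pdy F (x, y)))
          * (a + c * pdx F (x, y))
        + pdx G st * (c * pdy (pdx F) (x, y))
        + ((pdx (pdy G) st * (b + c * pdy F (x, y)) + pdy (pdy G) st * (l + m * pdy F (x, y)))
          * (k + m * pdx F (x, y))
        + pdy G st * (m * pdy (pdx F) (x, y))) := by
    have hL : HasDerivAt (fun t => p + r * pdx F (x, t)) (r * pdy (pdx F) (x, y)) y :=
      ((hasDerivAt_pdy hFx x y).const_mul r).const_add p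
    have hR := ((hasDerivAt_comp2 hGs hσY hτY).mul
        (((hasDerivAt_pdy hFx x y).const_mul c).const_add a)).add
      ((hasDerivAt_comp2 hGt hσY hτY).mul
        (((hasDerivAt_pdy hFx x y).const_mul m).const_add k))
    have hfe : (fun t => p + r * pdx F (x, t))
        = fun t => pdx G (a * x + b * t + c * F (x, t) + d, k * x + l * t + m * F (x, t) + n)
            * (a + c * pdx F (x, t))
          + pdy G (a * x + b * t + c * F (x, t) + d, k * x + l * t + m * F (x, t) + n)
            * (k + m * pdx F (x, t)) :=
      funext fun t => key1 x t
    exact (hfe ▸ hL).unique hR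
  have h21 : r * pdx (pdy F) (x, y)
      = (pdx (pdx G) st * (a + c * pdx F (x, y)) + pdy (pdx G) st * (k + m * pdx F (x, y)))
          * (b + c * pdy F (x, y))
        + pdx G st * (c * pdx (pdy F) (x, y))
        + ((pdx (pdy G) st * (a + c * pdx F (x, y)) + pdy (pdy G) st * (k + m * pdx F (x, y)))
          * (l + m * pdy F (x, y))
        + pdy G st * (m * pdx (pdy F) (x, y))) := by
    have hL : HasDerivAt (fun t => q + r * pdy F (t, y)) (r * pdx (pdy F) (x, y)) x :=
      ((hasDerivAt_pdx hFy x y).const_mul r).const_add q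
    have hR := ((hasDerivAt_comp2 hGs hσX hτX).mul
        (((hasDerivAt_pdx hFy x y).const_mul c).const_add b)).add
      ((hasDerivAt_comp2 hGt hσX hτX).mul
        (((hasDerivAt_pdx hFy x y).const_mul m).const_add l))
    have hfe : (fun t => q + r * pdy F (t, y))
        = fun t => pdx G (a * t + b * y + c * F (t, y) + d, k * t + l * y + m * F (t, y) + n)
            * (b + c * pdy F (t, y))
          + pdy G (a * t + b * y + c * F (t, y) + d, k * t + l * y + m * F (t, y) + n)
            * (l + m * pdy F (t, y)) :=
      funext fun t => key2 t y
    exact (hfe ▸ hL).unique hR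
  have h22 : r * pdy (pdy F) (x, y)
      = (pdx (pdx G) st * (b + c * pdy F (x, y)) + pdy (pdx G) st * (l + m * pdy F (x, y)))
          * (b + c * pdy F (x, y))
        + pdx G st * (c * pdy (pdy F) (x, y))
        + ((pdx (pdy G) st * (b + c * pdy F (x, y)) + pdy (pdy G) st * (l + m * pdy F (x, y)))
          * (l + m * pdy F (x, y))
        + pdy G st * (m * pdy (pdy F) (x, y))) := by
    have hL : HasDerivAt (fun t => q + r * pdy F (x, t)) (r * pdy (pdy F) (x, y)) y :=
      ((hasDerivAt_pdy hFy x y).const_mul r).const_add q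
    have hR := ((hasDerivAt_comp2 hGs hσY hτY).mul
        (((hasDerivAt_pdy hFy x y).const_mul c).const_add b)).add
      ((hasDerivAt_comp2 hGt hσY hτY).mul
        (((hasDerivAt_pdy hFy x y).const_mul m).const_add l))
    have hfe : (fun t => q + r * pdy F (x, t))
        = fun t => pdx G (a * x + b * t + c * F (x, t) + d, k * x + l * t + m * F (x, t) + n)
            * (b + c * pdy F (x, t))
          + pdy G (a * x + b * t + c * F (x, t) + d, k * x + l * t + m * F (x, t) + n)
            * (l + m * pdy F (x, t)) :=
      funext fun t => key2 x t
    exact (hfe ▸ hL).unique hR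
  -- the scalar identity δ/Λ = r - c·G_s - m·G_t
  have hkey : (a * (l * r - m * q) - b * (k * r - m * p) + c * (k * q - l * p))
      / ((a + c * pdx F (x, y)) * (l + m * pdy F (x, y))
        - (b + c * pdy F (x, y)) * (k + m * pdx F (x, y)))
      = r - c * pdx G st - m * pdy G st := by
    rw [div_eq_iff hΛ]
    linear_combination (m * (b + c * pdy F (x, y)) - c * (l + m * pdy F (x, y))) * key1 x y
      + (c * (k + m * pdx F (x, y)) - m * (a + c * pdx F (x, y))) * key2 x y
  have hMT : M.transpose
      = !![a + c * pdx F (x, y), b + c * pdy F (x, y);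
           k + m * pdx F (x, y), l + m * pdy F (x, y)] := by
    ext i j
    fin_cases i <;> fin_cases j <;> rfl
  have hmain : M * HG * M.transpose = (δ / Λ) • HF := by
    rw [hMT]
    ext i j
    fin_cases i <;> fin_cases j <;>
      simp [M, HG, HF, δ, Λ, Matrix.mul_apply, Matrix.transpose_apply,
        Fin.sum_univ_two, -Matrix.smul_apply] <;>
      rw [hkey]
    · linear_combination -h11
    · linear_combination -h12
    · linear_combination -h21
    · linear_combination -h22
  refine ⟨hmain, ?_⟩
  have hδΛ : δ / Λ ≠ 0 := div_ne_zero hδ hΛ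
  have hdet : M.det = Λ := by
    show Matrix.det !![a + c * pdx F (x, y), k + m * pdx F (x, y);
      b + c * pdy F (x, y), l + m * pdy F (x, y)] = _
    rw [Matrix.det_fin_two_of]; ring
  have hMdet : IsUnit M.det := by rw [hdet]; exact isUnit_iff_ne_zero.mpr hΛ
  have hMTdet : IsUnit M.transpose.det := by
    rw [Matrix.det_transpose, hdet]; exact isUnit_iff_ne_zero.mpr hΛ
  have hSdet : IsUnit ((δ / Λ) • (1 : Matrix (Fin 2) (Fin 2) ℝ)).det := by
    rw [Matrix.det_smul, Matrix.det_one, mul_one]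
    exact isUnit_iff_ne_zero.mpr (pow_ne_zero _ hδΛ)
  calc HG.rank = (M * HG * M.transpose).rank := by
        rw [Matrix.rank_mul_eq_left_of_isUnit_det M.transpose (M * HG) hMTdet,
          Matrix.rank_mul_eq_right_of_isUnit_det M HG hMdet]
    _ = ((δ / Λ) • HF).rank := by rw [hmain]
    _ = HF.rank := by
        rw [← Matrix.one_mul HF, ← Matrix.smul_mul,
          Matrix.rank_mul_eq_right_of_isUnit_det _ _ hSdet, Matrix.one_mul]
end

section
/- Let F be analytic near 0 in R² with F(0)=F_x(0)=F_y(0)=0, F_xx(0)=1, F_xy(0)=F_yy(0)=0, satisfying identically: F_yy = (F_xy/F_xx)·F_xy, and F_xxy = (F_xy/F_xx)·F_xxx (i.e. the Hessian determinant and S := (F_xx·F_xxy − F_xy·F_xxx)/F_xx² both vanish identically, with F_xx ≠ 0). Then F is independent of y: F(x,y) = f(x) for an analytic function of one variable f with f(0)=f'(0)=0, f''(0)=1. -/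
open Filter Topology Metric

section PartialDerivatives

variable {f g : ℝ × ℝ → ℝ} {p : ℝ × ℝ}

theorem hasDerivAt_slice_fst (h : DifferentiableAt ℝ f p) :
    HasDerivAt (fun x => f (x, p.2)) (fderiv ℝ f p (1, 0)) p.1 :=
  h.hasFDerivAt.comp_hasDerivAt p.1 ((hasDerivAt_id p.1).prodMk (hasDerivAt_const p.1 p.2))

theorem hasDerivAt_slice_snd (h : DifferentiableAt ℝ f p) :
    HasDerivAt (fun y => f (p.1, y)) (fderiv ℝ f p (0, 1)) p.2 :=
  h.hasFDerivAt.comp_hasDerivAt p.2 ((hasDerivAt_const p.2 p.1).prodMk (hasDerivAt_id p.2))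

theorem pdx_eq_fderiv (h : DifferentiableAt ℝ f p) : pdx f p = fderiv ℝ f p (1, 0) :=
  (hasDerivAt_slice_fst h).deriv

theorem pdy_eq_fderiv (h : DifferentiableAt ℝ f p) : pdy f p = fderiv ℝ f p (0, 1) :=
  (hasDerivAt_slice_snd h).deriv

theorem fderiv_eq_zero_of_pdx_of_pdy (h : DifferentiableAt ℝ f p) (hx : pdx f p = 0)
    (hy : pdy f p = 0) : fderiv ℝ f p = 0 := by
  rw [pdx_eq_fderiv h] at hx
  rw [pdy_eq_fderiv h] at hy
  ext <;> simpa

theorem Filter.EventuallyEq.pdx_eq (h : f =ᶠ[𝓝 p] g) : pdx f p = pdx g p :=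
  EventuallyEq.deriv_eq <| (Continuous.prodMk_left p.2).continuousAt.eventually h

theorem Filter.EventuallyEq.pdy_eq (h : f =ᶠ[𝓝 p] g) : pdy f p = pdy g p :=
  EventuallyEq.deriv_eq <| (Continuous.prodMk_right p.1).continuousAt.eventually h

theorem pdx_mul (hf : DifferentiableAt ℝ f p) (hg : DifferentiableAt ℝ g p) :
    pdx (fun q => f q * g q) p = pdx f p * g p + f p * pdx g p :=
  deriv_fun_mul (hasDerivAt_slice_fst hf).differentiableAt
    (hasDerivAt_slice_fst hg).differentiableAt

theorem pdx_div (hf : DifferentiableAt ℝ f p) (hg : DifferentiableAt ℝ g p) (hp : g p ≠ 0) :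
    pdx (fun q => f q / g q) p = (pdx f p * g p - f p * pdx g p) / g p ^ 2 :=
  deriv_fun_div (hasDerivAt_slice_fst hf).differentiableAt
    (hasDerivAt_slice_fst hg).differentiableAt hp

theorem pdy_div (hf : DifferentiableAt ℝ f p) (hg : DifferentiableAt ℝ g p) (hp : g p ≠ 0) :
    pdy (fun q => f q / g q) p = (pdy f p * g p - f p * pdy g p) / g p ^ 2 :=
  deriv_fun_div (hasDerivAt_slice_snd hf).differentiableAt
    (hasDerivAt_slice_snd hg).differentiableAt hp

theorem pdx_eventuallyEq_fderiv (h : AnalyticAt ℝ f p) :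
    pdx f =ᶠ[𝓝 p] fun q => fderiv ℝ f q (1, 0) :=
  h.eventually_analyticAt.mono fun _ hq => pdx_eq_fderiv hq.differentiableAt

theorem pdy_eventuallyEq_fderiv (h : AnalyticAt ℝ f p) :
    pdy f =ᶠ[𝓝 p] fun q => fderiv ℝ f q (0, 1) :=
  h.eventually_analyticAt.mono fun _ hq => pdy_eq_fderiv hq.differentiableAt

theorem analyticAt_pdx (h : AnalyticAt ℝ f p) : AnalyticAt ℝ (pdx f) p :=
  (((ContinuousLinearMap.apply ℝ ℝ ((1 : ℝ), (0 : ℝ))).analyticAt _).comp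
    h.fderiv).congr (pdx_eventuallyEq_fderiv h).symm

theorem analyticAt_pdy (h : AnalyticAt ℝ f p) : AnalyticAt ℝ (pdy f) p :=
  (((ContinuousLinearMap.apply ℝ ℝ ((0 : ℝ), (1 : ℝ))).analyticAt _).comp
    h.fderiv).congr (pdy_eventuallyEq_fderiv h).symm

theorem fderiv_fderiv_apply (hd : DifferentiableAt ℝ (fderiv ℝ f) p) (v w : ℝ × ℝ) :
    fderiv ℝ (fun q => fderiv ℝ f q v) p w = fderiv ℝ (fderiv ℝ f) p w v := by
  simp [fderiv_clm_apply hd (differentiableAt_const v)]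

theorem pdx_pdy_comm (h : AnalyticAt ℝ f p) : pdx (pdy f) p = pdy (pdx f) p := by
  have hd : DifferentiableAt ℝ (fderiv ℝ f) p := h.fderiv.differentiableAt
  rw [(pdy_eventuallyEq_fderiv h).pdx_eq, (pdx_eventuallyEq_fderiv h).pdy_eq,
    pdx_eq_fderiv (hd.clm_apply (differentiableAt_const _)),
    pdy_eq_fderiv (hd.clm_apply (differentiableAt_const _)),
    fderiv_fderiv_apply hd, fderiv_fderiv_apply hd]
  exact (h.contDiffAt.isSymmSndFDerivAt (n := 2) (by simp)) _ _

end PartialDerivatives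

section Cylinder

variable {F : ℝ × ℝ → ℝ} {p : ℝ × ℝ}

theorem pdx_ratio_eq_zero (hF : AnalyticAt ℝ F p) (hxx : pdx (pdx F) p ≠ 0)
    (hS : pdy (pdx (pdx F)) p = pdy (pdx F) p / pdx (pdx F) p * pdx (pdx (pdx F)) p) :
    pdx (fun q => pdy (pdx F) q / pdx (pdx F) q) p = 0 := by
  have hFx := analyticAt_pdx hF
  rw [pdx_div (analyticAt_pdy hFx).differentiableAt (analyticAt_pdx hFx).differentiableAt hxx,
    pdx_pdy_comm hFx, hS]
  field_simp
  ring

theorem pdy_ratio_eq_zero (hF : AnalyticAt ℝ F p) (hxx : pdx (pdx F) p ≠ 0)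
    (hH : ∀ᶠ q in 𝓝 p, pdy (pdy F) q = pdy (pdx F) q / pdx (pdx F) q * pdy (pdx F) q)
    (hS : pdy (pdx (pdx F)) p = pdy (pdx F) p / pdx (pdx F) p * pdx (pdx (pdx F)) p) :
    pdy (fun q => pdy (pdx F) q / pdx (pdx F) q) p = 0 := by
  set a := pdx (pdx F)
  set b := pdy (pdx F)
  have hFx := analyticAt_pdx hF
  have hg : AnalyticAt ℝ (fun q => b q / a q) p :=
    (analyticAt_pdy hFx).div (analyticAt_pdx hFx) hxx
  have hbx : pdx b p = pdy a p := pdx_pdy_comm hFx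
  have hby : pdy b p = pdy a p * (b p / a p) := by
    have hcomm : pdx (pdy F) =ᶠ[𝓝 p] b :=
      hF.eventually_analyticAt.mono fun _ hq => pdx_pdy_comm hq
    calc pdy b p = pdx (pdy (pdy F)) p := by
          rw [← hcomm.pdy_eq, pdx_pdy_comm (analyticAt_pdy hF)]
      _ = pdx (fun q => b q / a q * b q) p := Filter.EventuallyEq.pdx_eq hH
      _ = pdy a p * (b p / a p) := by
          rw [pdx_mul hg.differentiableAt (analyticAt_pdy hFx).differentiableAt,
            pdx_ratio_eq_zero hF hxx hS, hbx]
          ring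
  rw [pdy_div (analyticAt_pdy hFx).differentiableAt (analyticAt_pdx hFx).differentiableAt hxx,
    hby]
  field_simp
  ring

variable {s : Set (ℝ × ℝ)} {p₀ : ℝ × ℝ}

theorem pdy_pdx_eq_zero_of_vanishing_S (hs : IsOpen s) (hs' : IsPreconnected s)
    (hF : ∀ p ∈ s, AnalyticAt ℝ F p) (hxx : ∀ p ∈ s, pdx (pdx F) p ≠ 0)
    (hH : ∀ p ∈ s, pdy (pdy F) p = pdy (pdx F) p / pdx (pdx F) p * pdy (pdx F) p)
    (hS : ∀ p ∈ s,
      pdy (pdx (pdx F)) p = pdy (pdx F) p / pdx (pdx F) p * pdx (pdx (pdx F)) p)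
    (hp₀ : p₀ ∈ s) (hb₀ : pdy (pdx F) p₀ = 0) {p : ℝ × ℝ} (hp : p ∈ s) :
    pdy (pdx F) p = 0 := by
  set g := fun q => pdy (pdx F) q / pdx (pdx F) q
  have hg : ∀ q ∈ s, AnalyticAt ℝ g q := fun q hq =>
    (analyticAt_pdy (analyticAt_pdx (hF q hq))).div (analyticAt_pdx (analyticAt_pdx (hF q hq)))
      (hxx q hq)
  have hg' : s.EqOn (fderiv ℝ g) 0 := fun q hq =>
    fderiv_eq_zero_of_pdx_of_pdy (hg q hq).differentiableAt
      (pdx_ratio_eq_zero (hF q hq) (hxx q hq) (hS q hq))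
      (pdy_ratio_eq_zero (hF q hq) (hxx q hq)
        (eventually_of_mem (hs.mem_nhds hq) hH) (hS q hq))
  have hgp : g p = g p₀ :=
    hs.is_const_of_fderiv_eq_zero hs'
      (fun q hq => (hg q hq).differentiableAt.differentiableWithinAt) hg' hp hp₀
  simpa [g, hb₀, hxx p hp] using hgp

theorem pdy_eq_zero_of_second_partials_eq_zero (hs : IsOpen s) (hs' : IsPreconnected s)
    (hF : ∀ p ∈ s, AnalyticAt ℝ F p) (hxy : ∀ p ∈ s, pdy (pdx F) p = 0)
    (hyy : ∀ p ∈ s, pdy (pdy F) p = 0) (hp₀ : p₀ ∈ s) (hy₀ : pdy F p₀ = 0) {p : ℝ × ℝ}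
    (hp : p ∈ s) : pdy F p = 0 := by
  have hFy : ∀ q ∈ s, AnalyticAt ℝ (pdy F) q := fun q hq => analyticAt_pdy (hF q hq)
  have hconst := hs.is_const_of_fderiv_eq_zero hs'
    (fun q hq => (hFy q hq).differentiableAt.differentiableWithinAt)
    (fun q hq => fderiv_eq_zero_of_pdx_of_pdy (hFy q hq).differentiableAt
      ((pdx_pdy_comm (hF q hq)).trans (hxy q hq)) (hyy q hq)) hp hp₀
  rw [hconst, hy₀]

theorem eq_of_pdy_eq_zero_on_ball {f : ℝ × ℝ → ℝ} {x₀ y₀ r : ℝ}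
    (hf : ∀ q ∈ ball (x₀, y₀) r, DifferentiableAt ℝ f q)
    (hy : ∀ q ∈ ball (x₀, y₀) r, pdy f q = 0) (hp : p ∈ ball (x₀, y₀) r) :
    f p = f (p.1, y₀) := by
  rw [← ball_prod_same] at hf hy hp
  have hslice : ∀ t ∈ ball y₀ r, (p.1, t) ∈ ball x₀ r ×ˢ ball y₀ r :=
    fun t ht => ⟨hp.1, ht⟩
  exact isOpen_ball.is_const_of_deriv_eq_zero (f := fun t => f (p.1, t))
    (convex_ball y₀ r).isPreconnected
    (fun t ht =>
      (hasDerivAt_slice_snd (hf _ (hslice t ht))).differentiableAt.differentiableWithinAt)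
    (fun t ht => hy _ (hslice t ht)) hp.2 (mem_ball_self (pos_of_mem_ball hp.2))

end Cylinder

theorem cylinder_from_vanishing_S_general
    (F : ℝ × ℝ → ℝ) (U : Set (ℝ × ℝ)) (hU : IsOpen U) (h0 : ((0 : ℝ), (0 : ℝ)) ∈ U)
    (hF : ∀ p ∈ U, AnalyticAt ℝ F p)
    (hval0 : F (0, 0) = 0) (hvalx : pdx F (0, 0) = 0) (hvaly : pdy F (0, 0) = 0)
    (hvalxx : pdx (pdx F) (0, 0) = 1) (hvalxy : pdy (pdx F) (0, 0) = 0)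
    (hxx : ∀ p ∈ U, pdx (pdx F) p ≠ 0)
    (hH : ∀ p ∈ U,
      pdy (pdy F) p = pdy (pdx F) p / pdx (pdx F) p * pdy (pdx F) p)
    (hS : ∀ p ∈ U,
      pdy (pdx (pdx F)) p = pdy (pdx F) p / pdx (pdx F) p * pdx (pdx (pdx F)) p) :
    ∃ f : ℝ → ℝ, AnalyticAt ℝ f 0 ∧ f 0 = 0 ∧ deriv f 0 = 0 ∧ deriv^[2] f 0 = 1
      ∧ ∀ᶠ p in nhds ((0 : ℝ), (0 : ℝ)), F p = f p.1 := by
  obtain ⟨r, hr, hBU⟩ := Metric.isOpen_iff.1 hU _ h0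
  set B := ball ((0 : ℝ), (0 : ℝ)) r
  have hB : IsPreconnected B := (convex_ball _ _).isPreconnected
  have h0B : ((0 : ℝ), (0 : ℝ)) ∈ B := mem_ball_self hr
  have hxy : ∀ p ∈ B, pdy (pdx F) p = 0 := fun p hp =>
    pdy_pdx_eq_zero_of_vanishing_S isOpen_ball hB (fun q hq => hF q (hBU hq))
      (fun q hq => hxx q (hBU hq)) (fun q hq => hH q (hBU hq)) (fun q hq => hS q (hBU hq))
      h0B hvalxy hp
  have hyy : ∀ p ∈ B, pdy (pdy F) p = 0 := fun p hp => by simp [hH p (hBU hp), hxy p hp]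
  have hy : ∀ p ∈ B, pdy F p = 0 := fun p hp =>
    pdy_eq_zero_of_second_partials_eq_zero isOpen_ball hB (fun q hq => hF q (hBU hq)) hxy hyy h0B
      hvaly hp
  refine ⟨fun x => F (x, 0),
    (hF _ h0).comp (f := fun x => (x, 0)) (analyticAt_id.prod analyticAt_const),
    hval0, hvalx, hvalxx, ?_⟩
  filter_upwards [ball_mem_nhds _ hr] with p hp using
    eq_of_pdy_eq_zero_on_ball (fun q hq => (hF q (hBU hq)).differentiableAt) hy hp

/-- If `F` is analytic near the origin, normalized at the origin, with
`F_xx ≠ 0`, and satisfies identically `F_yy = (F_xy/F_xx)·F_xy` and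
`F_xxy = (F_xy/F_xx)·F_xxx` (i.e. the Hessian determinant and the relative
invariant `S` both vanish), then `F` is independent of `y`: the surface is a
cylinder over a plane curve. -/
theorem cylinder_from_vanishing_S
    (F : ℝ × ℝ → ℝ) (U : Set (ℝ × ℝ)) (hU : IsOpen U) (h0 : ((0 : ℝ), (0 : ℝ)) ∈ U)
    (hF : ∀ p ∈ U, AnalyticAt ℝ F p)
    (hval0 : F (0, 0) = 0) (hvalx : pdx F (0, 0) = 0) (hvaly : pdy F (0, 0) = 0)
    (hvalxx : pdx (pdx F) (0, 0) = 1) (hvalxy : pdy (pdx F) (0, 0) = 0)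
    (hvalyy : pdy (pdy F) (0, 0) = 0)
    (hxx : ∀ p ∈ U, pdx (pdx F) p ≠ 0)
    (hH : ∀ p ∈ U,
      pdy (pdy F) p = pdy (pdx F) p / pdx (pdx F) p * pdy (pdx F) p)
    (hS : ∀ p ∈ U,
      pdy (pdx (pdx F)) p = pdy (pdx F) p / pdx (pdx F) p * pdx (pdx (pdx F)) p) :
    ∃ f : ℝ → ℝ, AnalyticAt ℝ f 0 ∧ f 0 = 0 ∧ deriv f 0 = 0 ∧ deriv^[2] f 0 = 1
      ∧ ∀ᶠ p in nhds ((0 : ℝ), (0 : ℝ)), F p = f p.1 :=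
  cylinder_from_vanishing_S_general F U hU h0 hF hval0 hvalx hvaly hvalxx hvalxy hxx hH hS
end
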